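/- Let L be an almost-reductive Leibniz algebra over a field of characteristic zero with nilradical N. Then φ(L) = N², the derived subalgebra of the nilradical. -/

import Mathlib

namespace LeibnizPaper

variable {F L : Type*} [Field F] [AddCommGroup L] [Module F L]

/-- The right Leibniz identity. -/
def IsRightLeibniz (br : L →ₗ[F] L →ₗ[F] L) : Prop :=
  ∀ x y z : L, br x (br y z) = br (br x y) z - br (br x z) y

/-- The left Leibniz identity. -/
def IsLeftLeibniz (br : L →ₗ[F] L →ₗ[F] L) : Prop :=
  ∀ x y z : L, br x (br y z) = br (br x y) z + br y (br x z)

/-- Symmetric Leibniz algebra: both identities together with `[[x,y],[x,y]] = 0`. -/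
def IsSymmetricLeibniz (br : L →ₗ[F] L →ₗ[F] L) : Prop :=
  IsRightLeibniz br ∧ IsLeftLeibniz br ∧ ∀ x y : L, br (br x y) (br x y) = 0

def IsSubalg (br : L →ₗ[F] L →ₗ[F] L) (U : Submodule F L) : Prop :=
  ∀ x ∈ U, ∀ y ∈ U, br x y ∈ U

def IsIdeal (br : L →ₗ[F] L →ₗ[F] L) (U : Submodule F L) : Prop :=
  ∀ x ∈ U, ∀ y : L, br x y ∈ U ∧ br y x ∈ U

/-- `U` is an ideal of the subalgebra `A`. -/
def IsIdealIn (br : L →ₗ[F] L →ₗ[F] L) (A U : Submodule F L) : Prop :=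
  U ≤ A ∧ ∀ x ∈ U, ∀ y ∈ A, br x y ∈ U ∧ br y x ∈ U

/-- The subspace spanned by all products of an element of `A` with an element of `B`. -/
def brSpan (br : L →ₗ[F] L →ₗ[F] L) (A B : Submodule F L) : Submodule F L :=
  Submodule.span F {z | ∃ a ∈ A, ∃ b ∈ B, z = br a b}

def derSeries (br : L →ₗ[F] L →ₗ[F] L) (U : Submodule F L) : ℕ → Submodule F L
  | 0 => U
  | n+1 => brSpan br (derSeries br U n) (derSeries br U n)

def lcSeries (br : L →ₗ[F] L →ₗ[F] L) (U : Submodule F L) : ℕ → Submodule F L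
  | 0 => U
  | n+1 => brSpan br (lcSeries br U n) U

def IsSolvable (br : L →ₗ[F] L →ₗ[F] L) (U : Submodule F L) : Prop :=
  ∃ n, derSeries br U n = ⊥

def IsNilpotentSub (br : L →ₗ[F] L →ₗ[F] L) (U : Submodule F L) : Prop :=
  ∃ n, lcSeries br U n = ⊥

/-- `G` is the radical (largest solvable ideal). -/
def IsRadical (br : L →ₗ[F] L →ₗ[F] L) (G : Submodule F L) : Prop :=
  IsIdeal br G ∧ IsSolvable br G ∧ ∀ J, IsIdeal br J → IsSolvable br J → J ≤ G

/-- `G` is the radical of the subalgebra `A`. -/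
def IsRadicalIn (br : L →ₗ[F] L →ₗ[F] L) (A G : Submodule F L) : Prop :=
  IsIdealIn br A G ∧ IsSolvable br G ∧ ∀ J, IsIdealIn br A J → IsSolvable br J → J ≤ G

/-- `N` is the nilradical (largest nilpotent ideal). -/
def IsNilradical (br : L →ₗ[F] L →ₗ[F] L) (N : Submodule F L) : Prop :=
  IsIdeal br N ∧ IsNilpotentSub br N ∧ ∀ J, IsIdeal br J → IsNilpotentSub br J → J ≤ N

/-- The subalgebra `S` is semisimple: it has no nonzero solvable ideals. -/
def IsSemisimpleIn (br : L →ₗ[F] L →ₗ[F] L) (S : Submodule F L) : Prop :=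
  ∀ J, IsIdealIn br S J → IsSolvable br J → J = ⊥

/-- The Leibniz kernel `I`, the span of all squares. -/
def kernelIdeal (br : L →ₗ[F] L →ₗ[F] L) : Submodule F L :=
  Submodule.span F {y | ∃ x, y = br x x}

def IsMaxSubalg (br : L →ₗ[F] L →ₗ[F] L) (M : Submodule F L) : Prop :=
  IsSubalg br M ∧ M ≠ ⊤ ∧ ∀ M', IsSubalg br M' → M ≤ M' → M' ≠ ⊤ → M' = M

/-- `φ(L) = 0`: every ideal contained in all maximal subalgebras is trivial. -/
def IsPhiFree (br : L →ₗ[F] L →ₗ[F] L) : Prop :=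
  ∀ J, IsIdeal br J → (∀ M, IsMaxSubalg br M → J ≤ M) → J = ⊥

/-- `P` is the Frattini ideal: the largest ideal contained in every maximal subalgebra. -/
def IsFrattiniIdeal (br : L →ₗ[F] L →ₗ[F] L) (P : Submodule F L) : Prop :=
  IsIdeal br P ∧ (∀ M, IsMaxSubalg br M → P ≤ M) ∧
    ∀ J, IsIdeal br J → (∀ M, IsMaxSubalg br M → J ≤ M) → J ≤ P

/-- `A` is invariant under left and right multiplication by elements of `Sg`. -/
def IsSubBimodule (br : L →ₗ[F] L →ₗ[F] L) (Sg A : Submodule F L) : Prop :=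
  ∀ a ∈ A, ∀ s ∈ Sg, br a s ∈ A ∧ br s a ∈ A

/-- `L = N ∔ Sg` with `Sg` a Lie subalgebra and the nilradical `N` a completely
reducible `Sg`-bimodule. -/
def IsAlmostReductive (br : L →ₗ[F] L →ₗ[F] L) (N Sg : Submodule F L) : Prop :=
  IsNilradical br N ∧ IsSubalg br Sg ∧ (∀ x ∈ Sg, br x x = 0) ∧
    N ⊓ Sg = ⊥ ∧ N ⊔ Sg = ⊤ ∧
    ∀ A ≤ N, IsSubBimodule br Sg A → ∃ B ≤ N, IsSubBimodule br Sg B ∧ A ⊓ B = ⊥ ∧ A ⊔ B = N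

def IsAbelianSub (br : L →ₗ[F] L →ₗ[F] L) (U : Submodule F L) : Prop :=
  ∀ x ∈ U, ∀ y ∈ U, br x y = 0

def IsMinAbelianIdeal (br : L →ₗ[F] L →ₗ[F] L) (A : Submodule F L) : Prop :=
  IsIdeal br A ∧ A ≠ ⊥ ∧ IsAbelianSub br A ∧
    ∀ B, IsIdeal br B → B ≤ A → B ≠ ⊥ → B = A

/-- The abelian socle: the sum of the minimal abelian ideals. -/
def abelianSocle (br : L →ₗ[F] L →ₗ[F] L) : Submodule F L :=
  sSup {A | IsMinAbelianIdeal br A}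

/-- An algebra is almost algebraic if the algebra of its right multiplication operators
contains the semisimple and nilpotent Jordan components of each of its elements. -/
def IsAlmostAlgebraicBr (br : L →ₗ[F] L →ₗ[F] L) : Prop :=
  ∀ f ∈ Set.range br.flip, ∃ s ∈ Set.range br.flip, ∃ n ∈ Set.range br.flip,
    f = s + n ∧ Module.End.IsSemisimple s ∧ IsNilpotent n ∧ Commute s n

/-- Every nilpotent subalgebra is abelian. -/
def IsAAlgebra (br : L →ₗ[F] L →ₗ[F] L) : Prop :=
  ∀ U, IsSubalg br U → IsNilpotentSub br U → IsAbelianSub br U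

/-- The commutator bracket, as a bilinear map on an associative algebra. -/
def commBr (F E : Type*) [Field F] [Ring E] [Algebra F E] : E →ₗ[F] E →ₗ[F] E :=
  LinearMap.mul F E - (LinearMap.mul F E).flip

section Auxiliary

variable {F L : Type*} [Field F] [AddCommGroup L] [Module F L]
variable {br : L →ₗ[F] L →ₗ[F] L}

lemma mem_brSpan {A B : Submodule F L} {a b : L} (ha : a ∈ A) (hb : b ∈ B) :
    br a b ∈ brSpan br A B :=
  Submodule.subset_span ⟨a, ha, b, hb, rfl⟩

lemma brSpan_le {A B C : Submodule F L} :
    brSpan br A B ≤ C ↔ ∀ a ∈ A, ∀ b ∈ B, br a b ∈ C := by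
  constructor
  · intro hle a ha b hb; exact hle (mem_brSpan ha hb)
  · intro hgen
    apply Submodule.span_le.mpr
    rintro z ⟨a, ha, b, hb, rfl⟩
    exact hgen a ha b hb

lemma brSpan_mono {A A' B B' : Submodule F L} (hA : A ≤ A') (hB : B ≤ B') :
    brSpan br A B ≤ brSpan br A' B' :=
  brSpan_le.mpr fun a ha b hb => mem_brSpan (hA ha) (hB hb)

lemma brSpan_sup_left {A B C : Submodule F L} :
    brSpan br (A ⊔ B) C ≤ brSpan br A C ⊔ brSpan br B C := by
  refine brSpan_le.mpr fun a ha c hc => ?_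
  obtain ⟨x, hx, y, hy, rfl⟩ := Submodule.mem_sup.mp ha
  rw [map_add, LinearMap.add_apply]
  exact add_mem (Submodule.mem_sup_left (mem_brSpan hx hc))
    (Submodule.mem_sup_right (mem_brSpan hy hc))

lemma brSpan_sup_right {A B C : Submodule F L} :
    brSpan br A (B ⊔ C) ≤ brSpan br A B ⊔ brSpan br A C := by
  refine brSpan_le.mpr fun a ha c hc => ?_
  obtain ⟨x, hx, y, hy, rfl⟩ := Submodule.mem_sup.mp hc
  rw [map_add]
  exact add_mem (Submodule.mem_sup_left (mem_brSpan ha hx))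
    (Submodule.mem_sup_right (mem_brSpan ha hy))

lemma brSpan_bot_left {B : Submodule F L} : brSpan br ⊥ B = ⊥ := by
  apply le_bot_iff.mp
  refine brSpan_le.mpr fun a ha b _ => ?_
  rw [Submodule.mem_bot] at ha ⊢
  rw [ha, map_zero, LinearMap.zero_apply]

lemma lcSeries_zero' {U : Submodule F L} : lcSeries br U 0 = U := rfl

lemma lcSeries_succ' {U : Submodule F L} (n : ℕ) :
    lcSeries br U (n + 1) = brSpan br (lcSeries br U n) U := rfl

lemma lcSeries_le_self {U : Submodule F L} (hU : IsSubalg br U) :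
    ∀ n, lcSeries br U n ≤ U
  | 0 => le_rfl
  | n + 1 => le_trans (brSpan_mono (lcSeries_le_self hU n) le_rfl) (brSpan_le.mpr hU)

lemma lcSeries_succ_le {U : Submodule F L} (hU : IsSubalg br U) :
    ∀ n, lcSeries br U (n + 1) ≤ lcSeries br U n
  | 0 => brSpan_le.mpr hU
  | n + 1 => brSpan_mono (lcSeries_succ_le hU n) le_rfl

lemma lcSeries_antitone {U : Submodule F L} (hU : IsSubalg br U) {m n : ℕ} (hmn : m ≤ n) :
    lcSeries br U n ≤ lcSeries br U m :=
  antitone_nat_of_succ_le (lcSeries_succ_le hU) hmn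

lemma brSpan_lc_lc (h : IsRightLeibniz br) (U : Submodule F L) :
    ∀ b a, brSpan br (lcSeries br U a) (lcSeries br U b) ≤ lcSeries br U (a + b + 1) := by
  intro b
  induction b with
  | zero => intro a; exact le_rfl
  | succ b ih =>
    intro a
    refine brSpan_le.mpr fun x hx w hw => ?_
    have hcomap : lcSeries br U (b + 1) ≤ (lcSeries br U (a + (b + 1) + 1)).comap (br x) := by
      rw [lcSeries_succ']
      refine brSpan_le.mpr fun y hy z hz => ?_
      simp only [Submodule.mem_comap]
      rw [h x y z]
      refine sub_mem ?_ ?_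
      · have h1 : br x y ∈ lcSeries br U (a + b + 1) := ih a (mem_brSpan hx hy)
        have h2 : br (br x y) z ∈ lcSeries br U (a + b + 1 + 1) := mem_brSpan h1 hz
        rwa [show a + b + 1 + 1 = a + (b + 1) + 1 by omega] at h2
      · have h1 : br x z ∈ lcSeries br U (a + 1) := mem_brSpan hx hz
        have h2 : br (br x z) y ∈ lcSeries br U (a + 1 + b + 1) := ih (a + 1) (mem_brSpan h1 hy)
        rwa [show a + 1 + b + 1 = a + (b + 1) + 1 by omega] at h2
    exact hcomap hw

lemma isSubalg_of_isIdeal {U : Submodule F L} (hU : IsIdeal br U) : IsSubalg br U :=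
  fun x hx y _ => (hU x hx y).1

lemma sup_subalg_ideal {M I : Submodule F L} (hM : IsSubalg br M) (hI : IsIdeal br I) :
    IsSubalg br (M ⊔ I) := by
  intro x hx y hy
  obtain ⟨m, hm, i, hi, rfl⟩ := Submodule.mem_sup.mp hx
  obtain ⟨m', hm', i', hi', rfl⟩ := Submodule.mem_sup.mp hy
  have e : br (m + i) (m' + i') = br m m' + br m i' + (br i m' + br i i') := by
    simp only [map_add, LinearMap.add_apply]; abel
  rw [e]
  refine add_mem (add_mem (Submodule.mem_sup_left (hM m hm m' hm'))
    (Submodule.mem_sup_right (hI i' hi' m).2)) (Submodule.mem_sup_right ?_)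
  exact add_mem (hI i hi m').1 (hI i hi i').1

lemma sup_ideal_ideal {I J : Submodule F L} (hI : IsIdeal br I) (hJ : IsIdeal br J) :
    IsIdeal br (I ⊔ J) := by
  intro x hx y
  obtain ⟨i, hi, j, hj, rfl⟩ := Submodule.mem_sup.mp hx
  constructor
  · rw [map_add, LinearMap.add_apply]
    exact add_mem (Submodule.mem_sup_left (hI i hi y).1) (Submodule.mem_sup_right (hJ j hj y).1)
  · rw [map_add]
    exact add_mem (Submodule.mem_sup_left (hI i hi y).2) (Submodule.mem_sup_right (hJ j hj y).2)

lemma brSpan_self_ideal (h : IsRightLeibniz br) {N : Submodule F L} (hN : IsIdeal br N) :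
    IsIdeal br (brSpan br N N) := by
  intro x hx y
  induction hx using Submodule.span_induction with
  | mem z hz =>
    obtain ⟨a, ha, b, hb, rfl⟩ := hz
    constructor
    · have e : br (br a b) y = br a (br b y) + br (br a y) b := by
        rw [h a b y]; abel
      rw [e]
      exact add_mem (mem_brSpan ha (hN b hb y).1) (mem_brSpan (hN a ha y).1 hb)
    · rw [h y a b]
      exact sub_mem (mem_brSpan (hN a ha y).2 hb) (mem_brSpan (hN b hb y).2 ha)
  | zero => simp
  | add a b _ _ iha ihb =>
    constructor
    · rw [map_add, LinearMap.add_apply]; exact add_mem iha.1 ihb.1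
    · rw [map_add]; exact add_mem iha.2 ihb.2
  | smul c a _ iha =>
    constructor
    · rw [map_smul, LinearMap.smul_apply]; exact Submodule.smul_mem _ c iha.1
    · rw [map_smul]; exact Submodule.smul_mem _ c iha.2

lemma anti_of_alt {U : Submodule F L} (halt : ∀ x ∈ U, br x x = 0) {a b : L}
    (ha : a ∈ U) (hb : b ∈ U) : br a b = -br b a := by
  have h0 := halt (a + b) (add_mem ha hb)
  simp only [map_add, LinearMap.add_apply, halt a ha, halt b hb, zero_add, add_zero] at h0
  exact eq_neg_of_add_eq_zero_right h0

lemma nongenerator (h : IsRightLeibniz br) {N K : Submodule F L}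
    (hN : IsSubalg br N) (hnil : IsNilpotentSub br N)
    (hK : IsSubalg br K) (hKN : K ≤ N)
    (hsup : K ⊔ lcSeries br N 1 = N) : K = N := by
  have key : ∀ j, N ≤ K ⊔ lcSeries br N (j + 1) := by
    intro j
    induction j with
    | zero => exact le_of_eq hsup.symm
    | succ j ihj =>
      have h1 : lcSeries br N 1 ≤ K ⊔ lcSeries br N (j + 2) := by
        have hKlc : K ≤ lcSeries br N 0 := hKN
        calc lcSeries br N 1 = brSpan br N N := rfl
          _ ≤ brSpan br (K ⊔ lcSeries br N (j+1)) (K ⊔ lcSeries br N (j+1)) :=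
              brSpan_mono ihj ihj
          _ ≤ brSpan br K (K ⊔ lcSeries br N (j+1)) ⊔
              brSpan br (lcSeries br N (j+1)) (K ⊔ lcSeries br N (j+1)) := brSpan_sup_left
          _ ≤ K ⊔ lcSeries br N (j + 2) := by
              refine sup_le (le_trans brSpan_sup_right (sup_le ?_ ?_))
                (le_trans brSpan_sup_right (sup_le ?_ ?_))
              · exact le_trans (brSpan_le.mpr hK) le_sup_left
              · refine le_trans (brSpan_mono hKlc le_rfl) ?_
                have := brSpan_lc_lc h N (j+1) 0
                rw [show 0 + (j+1) + 1 = j + 2 by omega] at this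
                exact le_trans this le_sup_right
              · exact le_trans (brSpan_mono le_rfl hKN) le_sup_right
              · exact le_trans (brSpan_mono le_rfl (lcSeries_le_self hN (j+1))) le_sup_right
      calc N ≤ K ⊔ lcSeries br N 1 := le_of_eq hsup.symm
        _ ≤ K ⊔ (K ⊔ lcSeries br N (j + 2)) := sup_le_sup_left h1 K
        _ = K ⊔ lcSeries br N (j + 2) := by rw [← sup_assoc, sup_idem]
  obtain ⟨n, hn⟩ := hnil
  have hbot : lcSeries br N (n + 1) = ⊥ := by
    rw [lcSeries_succ', hn, brSpan_bot_left]
  refine le_antisymm hKN ?_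
  have := key n
  rwa [hbot, sup_bot_eq] at this

lemma bimod_sup {Sg A B : Submodule F L} (hA : IsSubBimodule br Sg A)
    (hB : IsSubBimodule br Sg B) : IsSubBimodule br Sg (A ⊔ B) := by
  intro a ha s hs
  obtain ⟨x, hx, y, hy, rfl⟩ := Submodule.mem_sup.mp ha
  constructor
  · rw [map_add, LinearMap.add_apply]
    exact add_mem (Submodule.mem_sup_left (hA x hx s hs).1)
      (Submodule.mem_sup_right (hB y hy s hs).1)
  · rw [map_add]
    exact add_mem (Submodule.mem_sup_left (hA x hx s hs).2)
      (Submodule.mem_sup_right (hB y hy s hs).2)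

lemma bimod_inf {Sg A B : Submodule F L} (hA : IsSubBimodule br Sg A)
    (hB : IsSubBimodule br Sg B) : IsSubBimodule br Sg (A ⊓ B) := by
  intro a ha s hs
  rw [Submodule.mem_inf] at ha
  exact ⟨Submodule.mem_inf.mpr ⟨(hA a ha.1 s hs).1, (hB a ha.2 s hs).1⟩,
    Submodule.mem_inf.mpr ⟨(hA a ha.1 s hs).2, (hB a ha.2 s hs).2⟩⟩

end Auxiliary


section Auxiliary2

variable {F L : Type*} [Field F] [AddCommGroup L] [Module F L]
variable {br : L →ₗ[F] L →ₗ[F] L}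

/-- Existence of maximal subalgebras of `Sg` containing a given proper subalgebra. -/
lemma exists_max_subalg_in [FiniteDimensional F L] {Sg E : Submodule F L}
    (hE : IsSubalg br E) (hELe : E ≤ Sg) (hENe : E ≠ Sg) :
    ∃ T : Submodule F L, IsSubalg br T ∧ E ≤ T ∧ T ≤ Sg ∧ T ≠ Sg ∧
      ∀ T', IsSubalg br T' → T ≤ T' → T' ≤ Sg → T' ≠ Sg → T' = T := by
  have hno : IsNoetherian F L := inferInstance
  obtain ⟨T, hT, hmax⟩ := set_has_maximal_iff_noetherian.mpr hno
    {T : Submodule F L | IsSubalg br T ∧ E ≤ T ∧ T ≤ Sg ∧ T ≠ Sg}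
    ⟨E, hE, le_rfl, hELe, hENe⟩
  refine ⟨T, hT.1, hT.2.1, hT.2.2.1, hT.2.2.2, fun T' h1 h2 h3 h4 => ?_⟩
  by_contra hne
  exact hmax T' ⟨h1, hT.2.1.trans h2, h3, h4⟩ (lt_of_le_of_ne h2 (Ne.symm hne))

/-- Part 3: for `x ∈ N \ N²` there is a maximal subalgebra of `L` avoiding `x`. -/
lemma exists_maxsubalg_avoiding [FiniteDimensional F L] (h : IsRightLeibniz br)
    {N Sg : Submodule F L} (hNid : IsIdeal br N) (hSgsub : IsSubalg br Sg)
    (hinf : N ⊓ Sg = ⊥) (hsup : N ⊔ Sg = ⊤)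
    (hCR : ∀ A ≤ N, IsSubBimodule br Sg A →
      ∃ B ≤ N, IsSubBimodule br Sg B ∧ A ⊓ B = ⊥ ∧ A ⊔ B = N)
    {x : L} (hxN : x ∈ N) (hxNN : x ∉ brSpan br N N) :
    ∃ M, IsMaxSubalg br M ∧ x ∉ M := by
  classical
  set NN := brSpan br N N with hNNdef
  have hNNid : IsIdeal br NN := brSpan_self_ideal h hNid
  have hNNbimod : IsSubBimodule br Sg NN := fun a ha s _ =>
    ⟨(hNNid a ha s).1, (hNNid a ha s).2⟩
  have hNN_N : NN ≤ N := brSpan_le.mpr fun a ha b hb => (hNid a ha b).1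
  have hno : IsNoetherian F L := inferInstance
  obtain ⟨A, hAmem, hAmax⟩ := set_has_maximal_iff_noetherian.mpr hno
    {A : Submodule F L | A ≤ N ∧ IsSubBimodule br Sg A ∧ NN ≤ A ∧ x ∉ A}
    ⟨NN, hNN_N, hNNbimod, le_rfl, hxNN⟩
  obtain ⟨hA_N, hAbi, hNNA, hxA⟩ := hAmem
  obtain ⟨B, hB_N, hBbi, hAB_inf, hAB_sup⟩ := hCR A hA_N hAbi
  have hx_mem : ∀ D, D ≤ B → IsSubBimodule br Sg D → D ≠ ⊥ → x ∈ A ⊔ D := by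
    intro D hDB hDbi hD0
    by_contra hxAD
    apply hAmax (A ⊔ D)
      ⟨sup_le hA_N (hDB.trans hB_N), bimod_sup hAbi hDbi, hNNA.trans le_sup_left, hxAD⟩
    apply lt_of_le_of_ne le_sup_left
    intro e
    apply hD0
    have hDA : D ≤ A := e ▸ le_sup_right
    exact le_bot_iff.mp (hAB_inf ▸ le_inf hDA hDB)
  have hirr : ∀ B', B' ≤ B → IsSubBimodule br Sg B' → B' = ⊥ ∨ B' = B := by
    intro B' hB'B hB'bi
    by_contra hcon
    push_neg at hcon
    obtain ⟨hne0, hneB⟩ := hcon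
    obtain ⟨C, hC_N, hCbi, hB'C_inf, hB'C_sup⟩ := hCR B' (hB'B.trans hB_N) hB'bi
    set B'' := B ⊓ C with hB''def
    have hB''bi : IsSubBimodule br Sg B'' := bimod_inf hBbi hCbi
    have hsupB : B' ⊔ B'' = B := by
      have e := sup_inf_assoc_of_le C hB'B
      rw [hB'C_sup, inf_eq_right.mpr hB_N] at e
      rw [hB''def, inf_comm B C, ← e]
    have hB''0 : B'' ≠ ⊥ := by
      intro e
      apply hneB
      rw [← hsupB, e, sup_bot_eq]
    have hx1 := hx_mem B' hB'B hB'bi hne0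
    have hx2 := hx_mem B'' inf_le_left hB''bi hB''0
    apply hxA
    obtain ⟨a1, ha1, b1, hb1, he1⟩ := Submodule.mem_sup.mp hx1
    obtain ⟨a2, ha2, b2, hb2, he2⟩ := Submodule.mem_sup.mp hx2
    have h12 : a1 + b1 = a2 + b2 := he1.trans he2.symm
    have hb12 : b1 - b2 = a2 - a1 := by
      calc b1 - b2 = a1 + b1 - (a1 + b2) := by abel
        _ = a2 + b2 - (a1 + b2) := by rw [h12]
        _ = a2 - a1 := by abel
    have hmem1 : b1 - b2 ∈ B := sub_mem (hB'B hb1) (Submodule.mem_inf.mp hb2).1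
    have hmem2 : b1 - b2 ∈ A := hb12 ▸ sub_mem ha2 ha1
    have hzero : b1 - b2 = 0 := by
      have : b1 - b2 ∈ A ⊓ B := Submodule.mem_inf.mpr ⟨hmem2, hmem1⟩
      rw [hAB_inf] at this
      exact (Submodule.mem_bot F).mp this
    have hb1b2 : b1 = b2 := sub_eq_zero.mp hzero
    have hb1' : b1 ∈ B' ⊓ C :=
      Submodule.mem_inf.mpr ⟨hb1, hb1b2 ▸ (Submodule.mem_inf.mp hb2).2⟩
    rw [hB'C_inf] at hb1'
    have hb10 : b1 = 0 := (Submodule.mem_bot F).mp hb1'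
    rw [← he1, hb10, add_zero]
    exact ha1
  set M := A ⊔ Sg with hMdef
  have hMsub : IsSubalg br M := by
    intro u hu v hv
    obtain ⟨a, ha, s0, hs0, rfl⟩ := Submodule.mem_sup.mp hu
    obtain ⟨a', ha', s0', hs0', rfl⟩ := Submodule.mem_sup.mp hv
    have e : br (a + s0) (a' + s0') = br a a' + br a s0' + (br s0 a' + br s0 s0') := by
      simp only [map_add, LinearMap.add_apply]; abel
    rw [e]
    refine add_mem (add_mem (Submodule.mem_sup_left (hNNA (mem_brSpan (hA_N ha) (hA_N ha'))))
      (Submodule.mem_sup_left (hAbi a ha s0' hs0').1)) ?_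
    exact add_mem (Submodule.mem_sup_left (hAbi a' ha' s0 hs0).2)
      (Submodule.mem_sup_right (hSgsub s0 hs0 s0' hs0'))
  have hMN : M ⊓ N = A := by
    apply le_antisymm
    · rintro z hz
      obtain ⟨hzM, hzN⟩ := Submodule.mem_inf.mp hz
      obtain ⟨a, ha, s0, hs0, he⟩ := Submodule.mem_sup.mp hzM
      have hs0N : s0 ∈ N := by
        have : s0 = z - a := by rw [← he]; abel
        rw [this]
        exact sub_mem hzN (hA_N ha)
      have : s0 ∈ N ⊓ Sg := Submodule.mem_inf.mpr ⟨hs0N, hs0⟩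
      rw [hinf] at this
      have hs00 : s0 = 0 := (Submodule.mem_bot F).mp this
      rw [← he, hs00, add_zero]
      exact ha
    · exact le_inf le_sup_left hA_N
  have hMne : M ≠ ⊤ := by
    intro e
    apply hxA
    have : x ∈ M ⊓ N := Submodule.mem_inf.mpr ⟨e ▸ Submodule.mem_top, hxN⟩
    rwa [hMN] at this
  refine ⟨M, ⟨hMsub, hMne, ?_⟩, fun hxM => hxA (hMN ▸ Submodule.mem_inf.mpr ⟨hxM, hxN⟩)⟩
  intro M' hM'sub hMM' hM'ne
  have hSgM' : Sg ≤ M' := le_sup_right.trans hMM'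
  have hD : IsSubBimodule br Sg (M' ⊓ N) := by
    intro a ha s hs
    obtain ⟨haM', haN⟩ := Submodule.mem_inf.mp ha
    exact ⟨Submodule.mem_inf.mpr ⟨hM'sub a haM' s (hSgM' hs), (hNid a haN s).1⟩,
      Submodule.mem_inf.mpr ⟨hM'sub s (hSgM' hs) a haM', (hNid a haN s).2⟩⟩
  have hAD : A ≤ M' ⊓ N := le_inf (le_sup_left.trans hMM') hA_N
  have hM'eq : M' = (M' ⊓ N) ⊔ Sg := by
    have e := sup_inf_assoc_of_le N hSgM'
    rw [sup_comm Sg N, hsup, top_inf_eq] at e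
    rw [inf_comm M' N, sup_comm]
    exact e
  have hDdec : M' ⊓ N = A ⊔ (M' ⊓ N ⊓ B) := by
    have e := sup_inf_assoc_of_le B hAD
    rw [hAB_sup] at e
    have e2 : N ⊓ (M' ⊓ N) = M' ⊓ N := inf_eq_right.mpr inf_le_right
    rw [e2] at e
    rw [inf_comm (M' ⊓ N) B]
    exact e
  rcases hirr (M' ⊓ N ⊓ B) inf_le_right (bimod_inf hD hBbi) with h0 | hB
  · rw [h0, sup_bot_eq] at hDdec
    rw [hM'eq, hDdec]
  · exfalso
    apply hM'ne
    have hNM' : N ≤ M' := by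
      have hBle : B ≤ M' ⊓ N := by rw [← hB]; exact inf_le_left
      have h' : A ⊔ B ≤ M' ⊓ N := sup_le hAD hBle
      rw [hAB_sup] at h'
      exact h'.trans inf_le_left
    rw [eq_top_iff, ← hsup]
    exact sup_le hNM' hSgM'

end Auxiliary2


section Auxiliary3

variable {F L : Type*} [Field F] [AddCommGroup L] [Module F L]
variable {br : L →ₗ[F] L →ₗ[F] L}

/-- If `T` is a maximal subalgebra of `Sg`, then `N ⊔ T` is a maximal subalgebra of `L`,
hence contains `P`; consequently `Sg ⊓ (N ⊔ P) ≤ T`. -/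
lemma S_le_maxIn {N Sg P : Submodule F L}
    (hNid : IsIdeal br N) (hSgsub : IsSubalg br Sg)
    (hinf : N ⊓ Sg = ⊥) (hsup : N ⊔ Sg = ⊤)
    (hPle : ∀ M, IsMaxSubalg br M → P ≤ M)
    {T : Submodule F L} (hT : IsSubalg br T) (hTle : T ≤ Sg) (hTne : T ≠ Sg)
    (hTmax : ∀ T', IsSubalg br T' → T ≤ T' → T' ≤ Sg → T' ≠ Sg → T' = T) :
    Sg ⊓ (N ⊔ P) ≤ T := by
  have hNT : IsSubalg br (N ⊔ T) := by
    rw [sup_comm]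
    exact sup_subalg_ideal hT hNid
  have hSgNT : Sg ⊓ (N ⊔ T) = T := by
    have e := sup_inf_assoc_of_le N hTle
    rw [hinf, sup_bot_eq] at e
    rw [inf_comm Sg (N ⊔ T), sup_comm N T]
    exact e
  have hNTne : N ⊔ T ≠ ⊤ := by
    intro ht
    apply hTne
    rw [← hSgNT, ht, inf_top_eq]
  have hmax : IsMaxSubalg br (N ⊔ T) := by
    refine ⟨hNT, hNTne, ?_⟩
    intro M' hM'sub hle hne'
    have hNle : N ≤ M' := le_sup_left.trans hle
    have e := sup_inf_assoc_of_le Sg hNle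
    rw [hsup, top_inf_eq] at e
    have hsub' : IsSubalg br (Sg ⊓ M') := fun x hx y hy =>
      Submodule.mem_inf.mpr ⟨hSgsub x (Submodule.mem_inf.mp hx).1 y (Submodule.mem_inf.mp hy).1,
        hM'sub x (Submodule.mem_inf.mp hx).2 y (Submodule.mem_inf.mp hy).2⟩
    have hTM' : T ≤ Sg ⊓ M' := le_inf hTle (le_sup_right.trans hle)
    have hne'' : Sg ⊓ M' ≠ Sg := by
      intro eq
      apply hne'
      rw [e, eq, hsup]
    have hfin := hTmax _ hsub' hTM' inf_le_left hne''
    rw [e, hfin]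
  have hPM := hPle _ hmax
  calc Sg ⊓ (N ⊔ P) ≤ Sg ⊓ (N ⊔ T) := inf_le_inf_left Sg (sup_le le_sup_left hPM)
    _ = T := hSgNT

lemma deriv_pow_vanish (h : IsRightLeibniz br) {Sg : Submodule F L}
    (hSgsub : IsSubalg br Sg) (halt : ∀ x ∈ Sg, br x x = 0) {s : L} (hs : s ∈ Sg) :
    ∀ m i j, i + j = m → ∀ x ∈ Sg, ∀ y ∈ Sg,
      ((br s) ^ i) x = 0 → ((br s) ^ j) y = 0 → ((br s) ^ m) (br x y) = 0 := by
  intro m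
  induction m with
  | zero =>
    intro i j hij x _ y _ hx0 hy0
    obtain ⟨rfl, rfl⟩ : i = 0 ∧ j = 0 := by omega
    rw [pow_zero, Module.End.one_apply] at hx0
    rw [pow_zero, Module.End.one_apply, hx0, map_zero, LinearMap.zero_apply]
  | succ m ihm =>
    intro i j hij x hx y hy hx0 hy0
    rcases Nat.eq_zero_or_pos i with rfl | hi
    · rw [pow_zero, Module.End.one_apply] at hx0
      rw [hx0, map_zero, LinearMap.zero_apply, map_zero]
    rcases Nat.eq_zero_or_pos j with rfl | hj
    · rw [pow_zero, Module.End.one_apply] at hy0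
      rw [hy0, map_zero, map_zero]
    obtain ⟨i', rfl⟩ : ∃ i', i = i' + 1 := ⟨i - 1, by omega⟩
    obtain ⟨j', rfl⟩ : ∃ j', j = j' + 1 := ⟨j - 1, by omega⟩
    have hder : br s (br x y) = br (br s x) y + br x (br s y) := by
      rw [h s x y, anti_of_alt halt (hSgsub s hs y hy) hx, sub_neg_eq_add]
    have hstep : ((br s) ^ (m + 1)) (br x y) = ((br s) ^ m) (br s (br x y)) := by
      rw [pow_succ, Module.End.mul_apply]
    have e1 : ((br s) ^ m) (br (br s x) y) = 0 := by
      apply ihm i' (j' + 1) (by omega) _ (hSgsub s hs x hx) _ hy _ hy0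
      rw [← Module.End.mul_apply, ← pow_succ]
      exact hx0
    have e2 : ((br s) ^ m) (br x (br s y)) = 0 := by
      apply ihm (i' + 1) j' (by omega) _ hx _ (hSgsub s hs y hy) hx0 _
      rw [← Module.End.mul_apply, ← pow_succ]
      exact hy0
    rw [hstep, hder, map_add, e1, e2, add_zero]

lemma pow_mem_of_invariant {f : L →ₗ[F] L} {U : Submodule F L}
    (hf : ∀ x ∈ U, f x ∈ U) : ∀ k, ∀ x ∈ U, (f ^ k) x ∈ U := by
  intro k
  induction k with
  | zero => intro x hx; rwa [pow_zero, Module.End.one_apply]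
  | succ k ih =>
    intro x hx
    rw [pow_succ', Module.End.mul_apply]
    exact hf _ (ih x hx)

/-- Part 5: every element of `S := Sg ⊓ (N ⊔ P)` acts nilpotently on `Sg`. -/
lemma exists_pow_vanish [FiniteDimensional F L] (h : IsRightLeibniz br)
    {N Sg P : Submodule F L} (hNid : IsIdeal br N) (hSgsub : IsSubalg br Sg)
    (halt : ∀ x ∈ Sg, br x x = 0)
    (hinf : N ⊓ Sg = ⊥) (hsup : N ⊔ Sg = ⊤)
    (hPid : IsIdeal br P) (hPle : ∀ M, IsMaxSubalg br M → P ≤ M)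
    {s : L} (hs : s ∈ Sg ⊓ (N ⊔ P)) :
    ∃ n, ∀ y ∈ Sg, ((br s) ^ n) y = 0 := by
  classical
  obtain ⟨hsSg, hsNP⟩ := Submodule.mem_inf.mp hs
  set f : L →ₗ[F] L := br s with hfdef
  have hfSg : ∀ x ∈ Sg, f x ∈ Sg := fun x hx => hSgsub s hsSg x hx
  have hfS : ∀ z ∈ Sg, f z ∈ Sg ⊓ (N ⊔ P) := by
    intro z hz
    refine Submodule.mem_inf.mpr ⟨hfSg z hz, ?_⟩
    obtain ⟨n0', hn0', p0, hp0, he⟩ := Submodule.mem_sup.mp hsNP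
    have : f z = br n0' z + br p0 z := by
      rw [hfdef, ← he, map_add, LinearMap.add_apply]
    rw [this]
    exact add_mem (Submodule.mem_sup_left (hNid n0' hn0' z).1)
      (Submodule.mem_sup_right (hPid p0 hp0 z).1)
  set g : ↥Sg →ₗ[F] ↥Sg := f.restrict hfSg with hgdef
  have hg : ∀ (k : ℕ) (x : ↥Sg), (((g ^ k) x : ↥Sg) : L) = (f ^ k) (x : L) := by
    intro k
    induction k with
    | zero => intro x; rw [pow_zero, pow_zero, Module.End.one_apply, Module.End.one_apply]
    | succ k ih =>
      intro x
      have hgx : ((g x : ↥Sg) : L) = f (x : L) := rfl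
      rw [pow_succ, pow_succ, Module.End.mul_apply, Module.End.mul_apply, ih (g x), hgx]
  have hno : IsNoetherian F ↥Sg := inferInstance
  obtain ⟨n0, hn0⟩ := monotone_stabilizes_iff_noetherian.mpr hno
    ⟨fun k => LinearMap.ker (g ^ k), monotone_nat_of_le_succ (by
      intro k x hx
      rw [LinearMap.mem_ker] at hx ⊢
      rw [pow_succ', Module.End.mul_apply, hx, map_zero])⟩
  set n := n0 + 1 with hndef
  have hker_st : ∀ m, n ≤ m → LinearMap.ker (g ^ n) = LinearMap.ker (g ^ m) := by
    intro m hm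
    have h1 := hn0 n (by omega)
    have h2 := hn0 m (by omega)
    exact h1.symm.trans h2
  have hdisj : ∀ x : ↥Sg, x ∈ LinearMap.ker (g ^ n) → x ∈ LinearMap.range (g ^ n) → x = 0 := by
    intro x hk hr
    obtain ⟨w, hw⟩ := hr
    have hwk : w ∈ LinearMap.ker (g ^ (n + n)) := by
      rw [LinearMap.mem_ker, pow_add, Module.End.mul_apply, hw]
      exact LinearMap.mem_ker.mp hk
    rw [← hker_st (n + n) (by omega)] at hwk
    rw [← hw]
    exact LinearMap.mem_ker.mp hwk
  have htop : LinearMap.ker (g ^ n) ⊔ LinearMap.range (g ^ n) = ⊤ := by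
    have hrk := LinearMap.finrank_range_add_finrank_ker (g ^ n)
    have hinf0 : LinearMap.ker (g ^ n) ⊓ LinearMap.range (g ^ n) = ⊥ := by
      rw [eq_bot_iff]
      rintro x hx
      obtain ⟨h1, h2⟩ := Submodule.mem_inf.mp hx
      rw [Submodule.mem_bot]
      exact hdisj x h1 h2
    have hsum := Submodule.finrank_sup_add_finrank_inf_eq
      (LinearMap.ker (g ^ n)) (LinearMap.range (g ^ n))
    rw [hinf0, finrank_bot, add_zero] at hsum
    apply Submodule.eq_top_of_finrank_eq
    omega
  set E : Submodule F L := Submodule.map Sg.subtype (LinearMap.ker (g ^ n)) with hEdef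
  have hE_le : E ≤ Sg := by
    rintro x ⟨y, _, rfl⟩
    exact y.2
  have hE_mem : ∀ x : L, x ∈ E ↔ x ∈ Sg ∧ (f ^ n) x = 0 := by
    intro x
    constructor
    · rintro ⟨y, hy, rfl⟩
      refine ⟨y.2, ?_⟩
      show (f ^ n) ((y : ↥Sg) : L) = 0
      rw [← hg n y, LinearMap.mem_ker.mp hy]
      rfl
    · rintro ⟨hxSg, hx0⟩
      refine ⟨⟨x, hxSg⟩, LinearMap.mem_ker.mpr (Subtype.ext ?_), rfl⟩
      rw [hg]
      exact hx0
  have hEsub : IsSubalg br E := by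
    intro x hx y hy
    have hx' := (hE_mem x).mp hx
    have hy' := (hE_mem y).mp hy
    have hxySg : br x y ∈ Sg := hSgsub x hx'.1 y hy'.1
    refine (hE_mem (br x y)).mpr ⟨hxySg, ?_⟩
    have h2n : (f ^ (n + n)) (br x y) = 0 :=
      deriv_pow_vanish h hSgsub halt hsSg (n + n) n n rfl x hx'.1 y hy'.1 hx'.2 hy'.2
    have hz : (⟨br x y, hxySg⟩ : ↥Sg) ∈ LinearMap.ker (g ^ (n + n)) :=
      LinearMap.mem_ker.mpr (Subtype.ext (by rw [hg]; exact h2n))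
    rw [← hker_st (n + n) (by omega)] at hz
    have hz' := LinearMap.mem_ker.mp hz
    have hz'' : (((g ^ n) (⟨br x y, hxySg⟩ : ↥Sg) : ↥Sg) : L) = 0 := by
      rw [hz']
      rfl
    rwa [hg] at hz''
  by_cases hESg : E = Sg
  · refine ⟨n, fun y hy => ?_⟩
    have : y ∈ E := by rw [hESg]; exact hy
    exact ((hE_mem y).mp this).2
  · exfalso
    obtain ⟨T, hTsub, hTE, hTle, hTne, hTmax⟩ := exists_max_subalg_in hEsub hE_le hESg
    have hST := S_le_maxIn hNid hSgsub hinf hsup hPle hTsub hTle hTne hTmax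
    have hR_le_S : Submodule.map Sg.subtype (LinearMap.range (g ^ n)) ≤ Sg ⊓ (N ⊔ P) := by
      rintro x ⟨y, hy, rfl⟩
      obtain ⟨w, hw⟩ := hy
      have hcoe : ((y : ↥Sg) : L) = (f ^ n) (w : L) := by rw [← hw, hg]
      have hlast : (f ^ n) (w : L) = f ((f ^ n0) (w : L)) := by
        rw [hndef, pow_succ', Module.End.mul_apply]
      show ((y : ↥Sg) : L) ∈ Sg ⊓ (N ⊔ P)
      rw [hcoe, hlast]
      exact hfS _ (pow_mem_of_invariant hfSg n0 (w : L) w.2)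
    have hsgeq : Sg = E ⊔ Submodule.map Sg.subtype (LinearMap.range (g ^ n)) := by
      rw [hEdef, ← Submodule.map_sup, htop, Submodule.map_subtype_top]
    have h1 : E ⊔ Submodule.map Sg.subtype (LinearMap.range (g ^ n)) ≤ T :=
      sup_le hTE (hR_le_S.trans hST)
    rw [← hsgeq] at h1
    exact hTne (le_antisymm hTle h1)

end Auxiliary3


section Auxiliary4

variable {F L : Type*} [Field F] [AddCommGroup L] [Module F L]
variable {br : L →ₗ[F] L →ₗ[F] L}

/-- Engel's theorem, transferred to our bespoke setting: a subalgebra all of whose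
elements act nilpotently on it is nilpotent. -/
lemma isNilpotentSub_of_ad_nilpotent [FiniteDimensional F L]
    (h : IsRightLeibniz br) {S : Submodule F L}
    (hsub : IsSubalg br S) (halt : ∀ x ∈ S, br x x = 0)
    (had : ∀ s ∈ S, ∃ n : ℕ, ∀ y ∈ S, ((br s) ^ n) y = 0) :
    IsNilpotentSub br S := by
  classical
  letI bS : Bracket ↥S ↥S := ⟨fun x y => ⟨br x y, hsub x x.2 y y.2⟩⟩
  have coe_br : ∀ x y : ↥S, ((⁅x, y⁆ : ↥S) : L) = br (x : L) (y : L) := fun _ _ => rfl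
  letI ringS : LieRing ↥S :=
    { add_lie := fun x y z => Subtype.ext (by
        show br ((x : L) + y) z = br (x : L) z + br (y : L) z
        rw [map_add, LinearMap.add_apply])
      lie_add := fun x y z => Subtype.ext (by
        show br (x : L) ((y : L) + z) = br (x : L) y + br (x : L) z
        rw [map_add])
      lie_self := fun x => Subtype.ext (halt x x.2)
      leibniz_lie := fun x y z => Subtype.ext (by
        show br (x : L) (br y z) = br (br (x : L) y) z + br (y : L) (br x z)
        rw [h x y z, anti_of_alt halt (hsub x x.2 z z.2) y.2, sub_neg_eq_add]) }
  letI algS : LieAlgebra F ↥S :=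
    { lie_smul := fun c x y => Subtype.ext (by
        show br (x : L) (c • y) = c • br (x : L) y
        rw [map_smul]) }
  have key : ∀ (x : ↥S) (k : ℕ) (y : ↥S),
      (((LieModule.toEnd F ↥S ↥S x ^ k) y : ↥S) : L) = ((br (x : L)) ^ k) (y : L) := by
    intro x k
    induction k with
    | zero => intro y; rw [pow_zero, pow_zero, Module.End.one_apply, Module.End.one_apply]
    | succ k ih =>
      intro y
      rw [pow_succ', pow_succ', Module.End.mul_apply, Module.End.mul_apply]
      have e1 : (LieModule.toEnd F ↥S ↥S x) ((LieModule.toEnd F ↥S ↥S x ^ k) y)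
          = ⁅x, (LieModule.toEnd F ↥S ↥S x ^ k) y⁆ := rfl
      rw [e1, coe_br, ih y]
  have hEng := LieAlgebra.isEngelian_of_isNoetherian (R := F) (L := ↥S)
  have hnilp : LieModule.IsNilpotent ↥S ↥S := by
    apply hEng
    intro x
    obtain ⟨n, hn⟩ := had (x : L) x.2
    refine ⟨n, LinearMap.ext fun y => Subtype.ext ?_⟩
    rw [LinearMap.zero_apply, key x n y, hn (y : L) y.2]
    simp
  obtain ⟨k, hk⟩ := (LieModule.isNilpotent_iff F ↥S ↥S).mp hnilp
  have trans : ∀ m, lcSeries br S m ≤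
      Submodule.map S.subtype (LieSubmodule.toSubmodule (LieModule.lowerCentralSeries F ↥S ↥S m)) := by
    intro m
    induction m with
    | zero =>
      rw [lcSeries_zero', LieModule.lowerCentralSeries_zero]
      intro x hx
      exact ⟨⟨x, hx⟩, by simp, rfl⟩
    | succ m ih =>
      rw [lcSeries_succ']
      refine brSpan_le.mpr fun a ha b hb => ?_
      obtain ⟨a', ha', hae⟩ := ih ha
      refine ⟨⁅a', (⟨b, hb⟩ : ↥S)⁆, ?_, by rw [← hae]; rfl⟩
      have hmem : ⁅a', (⟨b, hb⟩ : ↥S)⁆ ∈ LieModule.lowerCentralSeries F ↥S ↥S (m + 1) := by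
        rw [LieModule.lowerCentralSeries_succ]
        have h1 : ⁅(⟨b, hb⟩ : ↥S), a'⁆ ∈
            ⁅(⊤ : LieIdeal F ↥S), LieModule.lowerCentralSeries F ↥S ↥S m⁆ :=
          LieSubmodule.lie_mem_lie (LieSubmodule.mem_top _)
            ((LieSubmodule.mem_toSubmodule _).mp ha')
        have h2 : ⁅a', (⟨b, hb⟩ : ↥S)⁆ = -⁅(⟨b, hb⟩ : ↥S), a'⁆ := (lie_skew _ _).symm
        rw [h2]
        exact neg_mem h1
      exact (LieSubmodule.mem_toSubmodule _).mpr hmem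
  refine ⟨k, le_bot_iff.mp ?_⟩
  have := trans k
  rw [hk] at this
  simpa using this

/-- Nilpotency of `N ⊔ S` given the interaction estimates. -/
lemma nilpotentSub_sup (h : IsRightLeibniz br) {N S : Submodule F L}
    (hNsub : IsSubalg br N) (hSsub : IsSubalg br S)
    (hNnilp : IsNilpotentSub br N) (hSnilp : IsNilpotentSub br S)
    (hSN : brSpan br S N ≤ lcSeries br N 1) (hNS : brSpan br N S ≤ lcSeries br N 1) :
    IsNilpotentSub br (N ⊔ S) := by
  have E2 : ∀ a, brSpan br (lcSeries br N a) S ≤ lcSeries br N (a + 1) ∧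
      brSpan br S (lcSeries br N a) ≤ lcSeries br N (a + 1) := by
    intro a
    induction a with
    | zero => exact ⟨hNS, hSN⟩
    | succ a iha =>
      constructor
      · refine brSpan_le.mpr fun w hw s hs => ?_
        have hcl : lcSeries br N (a + 1) ≤ (lcSeries br N (a + 2)).comap (br.flip s) := by
          rw [lcSeries_succ']
          refine brSpan_le.mpr fun x hx y hy => ?_
          simp only [Submodule.mem_comap, LinearMap.flip_apply]
          have e : br (br x y) s = br x (br y s) + br (br x s) y := by
            rw [h x y s]; abel
          rw [e]
          refine add_mem ?_ ?_
          · have h1 : br y s ∈ lcSeries br N 1 := hNS (mem_brSpan hy hs)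
            have h2 := brSpan_lc_lc h N 1 a (mem_brSpan hx h1)
            rwa [show a + 1 + 1 = a + 2 by omega] at h2
          · have h1 : br x s ∈ lcSeries br N (a + 1) := iha.1 (mem_brSpan hx hs)
            exact mem_brSpan h1 hy
        exact hcl hw
      · refine brSpan_le.mpr fun s hs w hw => ?_
        have hcl : lcSeries br N (a + 1) ≤ (lcSeries br N (a + 2)).comap (br s) := by
          rw [lcSeries_succ']
          refine brSpan_le.mpr fun x hx y hy => ?_
          simp only [Submodule.mem_comap]
          rw [h s x y]
          refine sub_mem ?_ ?_
          · have h1 : br s x ∈ lcSeries br N (a + 1) := iha.2 (mem_brSpan hs hx)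
            exact mem_brSpan h1 hy
          · have h1 : br s y ∈ lcSeries br N 1 := hSN (mem_brSpan hs hy)
            have h2 := brSpan_lc_lc h N a 1 (mem_brSpan h1 hx)
            rwa [show 1 + a + 1 = a + 2 by omega] at h2
        exact hcl hw
  obtain ⟨kS, hkS⟩ := hSnilp
  obtain ⟨kN, hkN⟩ := hNnilp
  have main : ∀ k, lcSeries br (N ⊔ S) (k + 1) ≤ lcSeries br N 1 ⊔ lcSeries br S (k + 1) := by
    intro k
    induction k with
    | zero =>
      rw [lcSeries_succ']
      calc brSpan br (N ⊔ S) (N ⊔ S)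
          ≤ brSpan br N (N ⊔ S) ⊔ brSpan br S (N ⊔ S) := brSpan_sup_left
        _ ≤ lcSeries br N 1 ⊔ lcSeries br S 1 := by
            refine sup_le (le_trans brSpan_sup_right (sup_le ?_ ?_))
              (le_trans brSpan_sup_right (sup_le ?_ ?_))
            · exact le_sup_left
            · exact le_trans hNS le_sup_left
            · exact le_trans hSN le_sup_left
            · exact le_sup_right
    | succ k ihk =>
      rw [lcSeries_succ']
      calc brSpan br (lcSeries br (N ⊔ S) (k + 1)) (N ⊔ S)
          ≤ brSpan br (lcSeries br N 1 ⊔ lcSeries br S (k + 1)) (N ⊔ S) :=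
            brSpan_mono ihk le_rfl
        _ ≤ brSpan br (lcSeries br N 1) (N ⊔ S) ⊔
            brSpan br (lcSeries br S (k + 1)) (N ⊔ S) := brSpan_sup_left
        _ ≤ lcSeries br N 1 ⊔ lcSeries br S (k + 2) := by
            refine sup_le (le_trans brSpan_sup_right (sup_le ?_ ?_))
              (le_trans brSpan_sup_right (sup_le ?_ ?_))
            · exact le_trans (lcSeries_succ_le hNsub 1 :
                lcSeries br N 2 ≤ lcSeries br N 1) le_sup_left
            · exact le_trans ((E2 1).1.trans (lcSeries_succ_le hNsub 1)) le_sup_left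
            · exact le_trans (le_trans
                (brSpan_mono (lcSeries_le_self hSsub (k + 1)) le_rfl) hSN) le_sup_left
            · exact le_sup_right
  have hSbot : lcSeries br S (kS + 1) = ⊥ := by
    rw [lcSeries_succ', hkS, brSpan_bot_left]
  have tail : ∀ j, lcSeries br (N ⊔ S) (kS + 1 + j) ≤ lcSeries br N (1 + j) := by
    intro j
    induction j with
    | zero =>
      have := main kS
      rwa [hSbot, sup_bot_eq] at this
    | succ j ihj =>
      have e : kS + 1 + (j + 1) = (kS + 1 + j) + 1 := by omega
      rw [e, lcSeries_succ']
      calc brSpan br (lcSeries br (N ⊔ S) (kS + 1 + j)) (N ⊔ S)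
          ≤ brSpan br (lcSeries br N (1 + j)) (N ⊔ S) := brSpan_mono ihj le_rfl
        _ ≤ brSpan br (lcSeries br N (1 + j)) N ⊔
            brSpan br (lcSeries br N (1 + j)) S := brSpan_sup_right
        _ ≤ lcSeries br N (1 + (j + 1)) := by
            refine sup_le ?_ ?_
            · rw [show 1 + (j + 1) = (1 + j) + 1 by omega]
              exact le_rfl
            · rw [show 1 + (j + 1) = (1 + j) + 1 by omega]
              exact (E2 (1 + j)).1
  refine ⟨kS + 1 + kN, le_bot_iff.mp ?_⟩
  calc lcSeries br (N ⊔ S) (kS + 1 + kN) ≤ lcSeries br N (1 + kN) := tail kN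
    _ ≤ lcSeries br N kN := lcSeries_antitone hNsub (by omega)
    _ = ⊥ := hkN

end Auxiliary4


theorem frattini_eq_derived_nilradical [CharZero F] [FiniteDimensional F L]
    (br : L →ₗ[F] L →ₗ[F] L) (h : IsRightLeibniz br)
    (N Sg : Submodule F L) (har : IsAlmostReductive br N Sg)
    (P : Submodule F L) (hP : IsFrattiniIdeal br P) :
    P = brSpan br N N := by
  obtain ⟨⟨hNid, hNnilp, hNmax⟩, hSgsub, halt, hinf, hsup, hCR⟩ := har
  obtain ⟨hPid, hPle, hPmax⟩ := hP
  have hNsub : IsSubalg br N := isSubalg_of_isIdeal hNid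
  have hNN_N : brSpan br N N ≤ N := brSpan_le.mpr fun a ha b hb => (hNid a ha b).1
  have hNNid : IsIdeal br (brSpan br N N) := brSpan_self_ideal h hNid
  -- Direction 1 : N² ≤ P
  have hNNle : brSpan br N N ≤ P := by
    apply hPmax _ hNNid
    intro M hM
    by_contra hnle
    have hsubMNN : IsSubalg br (M ⊔ brSpan br N N) := sup_subalg_ideal hM.1 hNNid
    have htop : M ⊔ brSpan br N N = ⊤ := by
      by_contra hne
      exact hnle (le_sup_right.trans (le_of_eq (hM.2.2 _ hsubMNN le_sup_left hne)))
    have hKsup : (M ⊓ N) ⊔ lcSeries br N 1 = N := by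
      have e := sup_inf_assoc_of_le M hNN_N
      rw [sup_comm (brSpan br N N) M, htop, top_inf_eq] at e
      rw [show lcSeries br N 1 = brSpan br N N from rfl, sup_comm]
      exact e.symm
    have hKsubalg : IsSubalg br (M ⊓ N) := fun x hx y hy =>
      Submodule.mem_inf.mpr ⟨hM.1 x (Submodule.mem_inf.mp hx).1 y (Submodule.mem_inf.mp hy).1,
        hNsub x (Submodule.mem_inf.mp hx).2 y (Submodule.mem_inf.mp hy).2⟩
    have hK : M ⊓ N = N := nongenerator h hNsub hNnilp hKsubalg inf_le_right hKsup
    apply hnle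
    refine hNN_N.trans ?_
    rw [← hK]
    exact inf_le_left
  -- Direction 2 : P ≤ N²
  have hPN : P ⊓ N ≤ brSpan br N N := by
    intro x hx
    by_contra hxNN
    obtain ⟨M, hMmax, hxM⟩ := exists_maxsubalg_avoiding h hNid hSgsub hinf hsup hCR
      (Submodule.mem_inf.mp hx).2 hxNN
    exact hxM (hPle M hMmax (Submodule.mem_inf.mp hx).1)
  set S := Sg ⊓ (N ⊔ P) with hSdef
  have hS_Sg : S ≤ Sg := inf_le_left
  have hSid_in_Sg : ∀ s ∈ S, ∀ t ∈ Sg, br s t ∈ S ∧ br t s ∈ S := by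
    intro s hs t ht
    obtain ⟨hsSg, hsNP⟩ := Submodule.mem_inf.mp hs
    obtain ⟨n0, hn0, p0, hp0, he⟩ := Submodule.mem_sup.mp hsNP
    constructor
    · refine Submodule.mem_inf.mpr ⟨hSgsub s hsSg t ht, ?_⟩
      have e : br s t = br n0 t + br p0 t := by rw [← he, map_add, LinearMap.add_apply]
      rw [e]
      exact add_mem (Submodule.mem_sup_left (hNid n0 hn0 t).1)
        (Submodule.mem_sup_right (hPid p0 hp0 t).1)
    · refine Submodule.mem_inf.mpr ⟨hSgsub t ht s hsSg, ?_⟩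
      have e : br t s = br t n0 + br t p0 := by rw [← he, map_add]
      rw [e]
      exact add_mem (Submodule.mem_sup_left (hNid n0 hn0 t).2)
        (Submodule.mem_sup_right (hPid p0 hp0 t).2)
  have hSsub : IsSubalg br S := fun x hx y hy => (hSid_in_Sg x hx y (hS_Sg hy)).1
  have haltS : ∀ x ∈ S, br x x = 0 := fun x hx => halt x (hS_Sg hx)
  have had : ∀ s ∈ S, ∃ n, ∀ y ∈ S, ((br s) ^ n) y = 0 := by
    intro s hs
    obtain ⟨n, hn⟩ := exists_pow_vanish h hNid hSgsub halt hinf hsup hPid hPle hs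
    exact ⟨n, fun y hy => hn y (hS_Sg hy)⟩
  have hSnilp : IsNilpotentSub br S := isNilpotentSub_of_ad_nilpotent h hSsub haltS had
  have hSN : brSpan br S N ≤ lcSeries br N 1 := by
    refine brSpan_le.mpr fun s hs y hy => ?_
    obtain ⟨hsSg, hsNP⟩ := Submodule.mem_inf.mp hs
    obtain ⟨n0, hn0, p0, hp0, he⟩ := Submodule.mem_sup.mp hsNP
    have e : br s y = br n0 y + br p0 y := by rw [← he, map_add, LinearMap.add_apply]
    rw [e]
    exact add_mem (mem_brSpan hn0 hy)
      (hPN (Submodule.mem_inf.mpr ⟨(hPid p0 hp0 y).1, (hNid y hy p0).2⟩))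
  have hNS : brSpan br N S ≤ lcSeries br N 1 := by
    refine brSpan_le.mpr fun y hy s hs => ?_
    obtain ⟨hsSg, hsNP⟩ := Submodule.mem_inf.mp hs
    obtain ⟨n0, hn0, p0, hp0, he⟩ := Submodule.mem_sup.mp hsNP
    have e : br y s = br y n0 + br y p0 := by rw [← he, map_add]
    rw [e]
    exact add_mem (mem_brSpan hy hn0)
      (hPN (Submodule.mem_inf.mpr ⟨(hPid p0 hp0 y).2, (hNid y hy p0).1⟩))
  have hNP_NS : N ⊔ P = N ⊔ S := by
    apply le_antisymm
    · refine sup_le le_sup_left ?_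
      intro p hp
      have hpT : p ∈ N ⊔ Sg := by rw [hsup]; exact Submodule.mem_top
      obtain ⟨m, hm, t, ht, he⟩ := Submodule.mem_sup.mp hpT
      have htS : t ∈ S := by
        refine Submodule.mem_inf.mpr ⟨ht, ?_⟩
        have : t = p - m := by rw [← he]; abel
        rw [this]
        exact sub_mem (Submodule.mem_sup_right hp) (Submodule.mem_sup_left hm)
      rw [← he]
      exact add_mem (Submodule.mem_sup_left hm) (Submodule.mem_sup_right htS)
    · exact sup_le le_sup_left (inf_le_right.trans (sup_le le_sup_left le_sup_right))
  have hJid : IsIdeal br (N ⊔ P) := sup_ideal_ideal hNid hPid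
  have hJnilp : IsNilpotentSub br (N ⊔ P) := by
    rw [hNP_NS]
    exact nilpotentSub_sup h hNsub hSsub hNnilp hSnilp hSN hNS
  have hJN : N ⊔ P ≤ N := hNmax _ hJid hJnilp
  have hPleN : P ≤ N := le_sup_right.trans hJN
  apply le_antisymm _ hNNle
  intro p hp
  exact hPN (Submodule.mem_inf.mpr ⟨hp, hPleN hp⟩)


end LeibnizPaper
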